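/- arXiv:2512.13091 — 3 statements merged into one kernel-verified Lean document; each statement's English description precedes it below -/
import Mathlib

section
/- For any Dirichlet character χ modulo L whose square χ² is non-principal, the sum over r ≤ √Y of φ(r²)·χ²(r)/r is O_ε(Y^{1/2+ε}). -/
/-!
With `ψ = χ²` and `N = ⌊√Y⌋`, the summand is `φ(r) ψ(r)` because `φ(r²) = r φ(r)`, and
`φ = μ * id` turns the sum into `∑_{d ≤ N} μ(d) ψ(d) ∑_{e ≤ N/d} e ψ(e)`. Since `ψ` is
non-principal its partial sums are bounded in terms of `L` only, so by Abel summation the inner sum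
is `O(N/d)`; summing over `d` gives `O(N log N) = O(Y^{1/2+ε})`.
-/

open Finset
open scoped Nat ArithmeticFunction.Moebius

theorem Nat.totient_sq (n : ℕ) : φ (n ^ 2) = n * φ n := by
  rcases n.eq_zero_or_pos with rfl | hn
  · simp
  have h := Nat.totient_gcd_mul_totient_mul n n
  rw [Nat.gcd_self, ← sq] at h
  exact Nat.eq_of_mul_eq_mul_left (Nat.totient_pos.mpr hn) (h.trans (by ring))

theorem Nat.cast_totient_sq_div_self {K : Type*} [Semifield K] [CharZero K] (n : ℕ) :
    (φ (n ^ 2) : K) / n = φ n := by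
  rcases eq_or_ne n 0 with rfl | hn
  · simp
  rw [Nat.totient_sq, Nat.cast_mul, mul_div_cancel_left₀ _ (Nat.cast_ne_zero.mpr hn)]

theorem Nat.cast_totient_eq_sum_moebius_mul {R : Type*} [Ring R] (n : ℕ) :
    (φ n : R) = ∑ x ∈ n.divisorsAntidiagonal, (μ x.1 : R) * x.2 := by
  rcases n.eq_zero_or_pos with rfl | hn
  · simp
  refine ((ArithmeticFunction.sum_eq_iff_sum_mul_moebius_eq
    (f := fun n => (φ n : R)) (g := fun n => (n : R))).mp (fun m _ => ?_) n hn).symm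
  rw [← Nat.cast_sum, Nat.sum_totient]

theorem Finset.sum_Ioc_sum_divisorsAntidiagonal {R : Type*} [Semiring R] (f g : ℕ → R)
    (N : ℕ) :
    ∑ n ∈ Ioc 0 N, ∑ x ∈ n.divisorsAntidiagonal, f x.1 * g x.2 =
      ∑ n ∈ Ioc 0 N, f n * ∑ m ∈ Ioc 0 (N / n), g m := by
  have hcoe (u : ℕ → R) {n : ℕ} (hn : n ≠ 0) : toArithmeticFunction u n = u n := if_neg hn
  have h := ArithmeticFunction.sum_Ioc_mul_eq_sum_sum (toArithmeticFunction f)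
    (toArithmeticFunction g) N
  rw [← ArithmeticFunction.coe_mul, LSeries.convolution_def] at h
  convert h using 2 with n hn n hn
  · refine sum_congr rfl fun x hx => ?_
    rw [hcoe f (Nat.left_ne_zero_of_mem_divisorsAntidiagonal hx),
      hcoe g (Nat.right_ne_zero_of_mem_divisorsAntidiagonal hx)]
  · rw [hcoe f (mem_Ioc.mp hn).1.ne', sum_congr rfl fun m hm => hcoe g (mem_Ioc.mp hm).1.ne']

theorem Function.Periodic.norm_sum_range_le {E : Type*} [SeminormedAddCommGroup E]
    {f : ℕ → E} {L : ℕ} (hf : Function.Periodic f L) (hL : 0 < L)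
    (hsum : ∑ i ∈ range L, f i = 0) (hf1 : ∀ i, ‖f i‖ ≤ 1) (n : ℕ) :
    ‖∑ i ∈ range n, f i‖ ≤ L := by
  have hshift : ∀ q m, ∑ i ∈ range m, f (L * q + i) = ∑ i ∈ range m, f i := fun q m =>
    sum_congr rfl fun i _ => by rw [add_comm, mul_comm]; exact hf.nat_mul q i
  have hperiods : ∀ q, ∑ i ∈ range (L * q), f i = 0 := by
    intro q
    induction q with
    | zero => simp
    | succ q ih => rw [Nat.mul_succ, sum_range_add, ih, hshift, hsum, add_zero]
  rw [← Nat.div_add_mod n L, sum_range_add, hperiods, zero_add, hshift]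
  calc ‖∑ i ∈ range (n % L), f i‖ ≤ ∑ _i ∈ range (n % L), (1 : ℝ) :=
        (norm_sum_le _ _).trans (sum_le_sum fun i _ => hf1 i)
    _ ≤ L := by simpa using (Nat.mod_lt n hL).le

theorem Finset.sum_range_succ_nsmul_eq {M : Type*} [AddCommGroup M] (a : ℕ → M) (N : ℕ) :
    ∑ i ∈ range (N + 1), i • a i =
      N • ∑ i ∈ range (N + 1), a i - ∑ j ∈ range N, ∑ i ∈ range (j + 1), a i := by
  induction N with
  | zero => simp
  | succ N ih =>
    rw [sum_range_succ (fun i => i • a i), ih,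
      sum_range_succ (fun j => ∑ i ∈ range (j + 1), a i), sum_range_succ a (N + 1)]
    simp only [succ_nsmul, nsmul_add]
    abel

theorem Finset.norm_sum_range_succ_nsmul_le {E : Type*} [SeminormedAddCommGroup E]
    {a : ℕ → E} {B : ℝ} (h : ∀ n, ‖∑ i ∈ range n, a i‖ ≤ B) (N : ℕ) :
    ‖∑ i ∈ range (N + 1), i • a i‖ ≤ 2 * N * B := by
  rw [sum_range_succ_nsmul_eq]
  calc _ ≤ ‖N • ∑ i ∈ range (N + 1), a i‖ +
          ‖∑ j ∈ range N, ∑ i ∈ range (j + 1), a i‖ := norm_sub_le _ _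
    _ ≤ N * B + ∑ _j ∈ range N, B := by
        gcongr
        · exact norm_nsmul_le.trans (by gcongr; exact h _)
        · exact (norm_sum_le _ _).trans (sum_le_sum fun j _ => h _)
    _ = 2 * N * B := by rw [sum_const, card_range, nsmul_eq_mul]; ring

namespace DirichletCharacter

variable {L : ℕ}

theorem sum_range_eq_zero_of_ne_one [NeZero L] {R : Type*} [CommRing R] [IsDomain R]
    {ψ : DirichletCharacter R L} (hψ : ψ ≠ 1) : ∑ i ∈ range L, ψ i = 0 := by
  rw [← MulChar.sum_eq_zero_of_ne_one hψ]
  refine sum_nbij (fun i : ℕ => (i : ZMod L)) (fun _ _ => mem_univ _) ?_ ?_ fun _ _ => rfl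
  · intro i hi j hj hij
    simpa [ZMod.val_natCast_of_lt (mem_range.mp hi), ZMod.val_natCast_of_lt (mem_range.mp hj)]
      using congrArg ZMod.val hij
  · intro x _
    exact ⟨x.val, mem_range.mpr (ZMod.val_lt x), ZMod.natCast_zmod_val x⟩

theorem norm_sum_range_le {ψ : DirichletCharacter ℂ L} (hψ : ψ ≠ 1) (n : ℕ) :
    ‖∑ i ∈ range n, ψ i‖ ≤ L + 1 := by
  rcases L.eq_zero_or_pos with rfl | hL
  -- modulo `0` the units are `±1`, so `ψ` vanishes on every natural number except `1`
  · refine (norm_sum_le _ _).trans ?_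
    calc ∑ i ∈ range n, ‖ψ i‖ ≤ ∑ i ∈ range n, if i = 1 then (1 : ℝ) else 0 := by
          refine sum_le_sum fun i _ => ?_
          split_ifs with hi
          · exact ψ.norm_le_one _
          · rw [ψ.map_nonunit fun hu => ?_, norm_zero]
            have : (i : ℤ) = 1 ∨ (i : ℤ) = -1 := Int.isUnit_iff.mp hu
            omega
      _ ≤ (0 : ℕ) + 1 := by
          rw [sum_ite_eq']
          split_ifs <;> norm_num
  · have : NeZero L := ⟨hL.ne'⟩
    refine (Function.Periodic.norm_sum_range_le (f := fun i : ℕ => ψ i) (fun i => ?_) hL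
      (sum_range_eq_zero_of_ne_one hψ) (fun i => ψ.norm_le_one _) n).trans (by linarith)
    simp

theorem norm_sum_Ioc_mul_le {ψ : DirichletCharacter ℂ L} (hψ : ψ ≠ 1) (M : ℕ) :
    ‖∑ e ∈ Ioc 0 M, (e : ℂ) * ψ e‖ ≤ 2 * (L + 1) * M := by
  have h := norm_sum_range_succ_nsmul_le (norm_sum_range_le hψ) M
  rw [Nat.range_succ_eq_Icc_zero, Icc_eq_cons_Ioc (Nat.zero_le M), sum_cons] at h
  simp only [zero_smul, zero_add, nsmul_eq_mul] at h
  linarith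

theorem cast_totient_mul_eq_sum {R : Type*} [CommRing R] (ψ : DirichletCharacter R L) (n : ℕ) :
    (φ n : R) * ψ n = ∑ x ∈ n.divisorsAntidiagonal, (μ x.1 * ψ x.1) * (x.2 * ψ x.2) := by
  rw [Nat.cast_totient_eq_sum_moebius_mul, sum_mul]
  refine sum_congr rfl fun x hx => ?_
  rw [← (Nat.mem_divisorsAntidiagonal.mp hx).1, Nat.cast_mul, map_mul]
  ring

theorem norm_sum_Ioc_totient_mul_le {ψ : DirichletCharacter ℂ L} (hψ : ψ ≠ 1) (N : ℕ) :
    ‖∑ r ∈ Ioc 0 N, (φ r : ℂ) * ψ r‖ ≤ 2 * (L + 1) * (N * (1 + Real.log N)) := by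
  rw [sum_congr rfl fun r _ => ψ.cast_totient_mul_eq_sum r,
    sum_Ioc_sum_divisorsAntidiagonal (fun d => μ d * ψ d) (fun e => e * ψ e)]
  calc _ ≤ ∑ d ∈ Ioc 0 N, 2 * (L + 1) * ((N / d : ℕ) : ℝ) := by
        refine (norm_sum_le _ _).trans (sum_le_sum fun d _ => ?_)
        have hμ : ‖(μ d : ℂ)‖ ≤ 1 := by
          simpa using (Int.cast_le (R := ℝ)).mpr ArithmeticFunction.abs_moebius_le_one
        simpa using norm_mul_le_of_le (norm_mul_le_of_le hμ (ψ.norm_le_one d))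
          (norm_sum_Ioc_mul_le hψ (N / d))
    _ ≤ ∑ d ∈ Ioc 0 N, 2 * (L + 1) * (N * (d : ℝ)⁻¹) := by
        gcongr
        exact Nat.cast_div_le.trans_eq (div_eq_mul_inv _ _)
    _ = 2 * (L + 1) * (N * harmonic N) := by
        rw [← mul_sum, ← mul_sum, harmonic_eq_sum_Icc, ← Icc_add_one_left_eq_Ioc, zero_add]
        push_cast
        rfl
    _ ≤ 2 * (L + 1) * (N * (1 + Real.log N)) := by
        gcongr
        exact harmonic_le_one_add_log N

end DirichletCharacter

theorem Real.mul_one_add_log_le {x δ : ℝ} (hx : 1 ≤ x) (hδ : 0 < δ) :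
    x * (1 + Real.log x) ≤ (1 + 1 / δ) * x ^ (1 + δ) := by
  have hlog := Real.log_le_rpow_div (by linarith : 0 ≤ x) hδ
  have hpow : 1 ≤ x ^ δ := Real.one_le_rpow hx hδ.le
  rw [Real.rpow_add (by linarith), Real.rpow_one]
  have : 1 + Real.log x ≤ (1 + 1 / δ) * x ^ δ := by
    rw [add_mul, one_div_mul_eq_div]; linarith
  nlinarith

/-- For any Dirichlet character χ modulo L whose square χ² is non-principal,
∑_{r ≤ √Y} φ(r²)·χ²(r)/r = O_{ε,L}(Y^{1/2+ε}). -/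
theorem stmt0 (L : ℕ) (χ : DirichletCharacter ℂ L) (hχ : χ ^ 2 ≠ 1)
    (ε : ℝ) (hε : 0 < ε) :
    ∃ C : ℝ, ∀ Y : ℝ, 1 ≤ Y →
      ‖∑ r ∈ Finset.Icc 1 ⌊Real.sqrt Y⌋₊,
          (Nat.totient (r ^ 2) : ℂ) * (χ ^ 2) (r : ZMod L) / (r : ℂ)‖
        ≤ C * Y ^ ((1 : ℝ) / 2 + ε) := by
  refine ⟨2 * (L + 1) * (1 + 1 / (2 * ε)), fun Y hY => ?_⟩
  set N := ⌊Real.sqrt Y⌋₊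
  have hN : (1 : ℝ) ≤ N := by
    exact_mod_cast Nat.le_floor (by simpa using Real.one_le_sqrt.mpr hY)
  have hNY : (N : ℝ) ≤ Real.sqrt Y := Nat.floor_le (Real.sqrt_nonneg Y)
  have hsum : ∑ r ∈ Icc 1 N, (φ (r ^ 2) : ℂ) * (χ ^ 2) r / r =
      ∑ r ∈ Ioc 0 N, (φ r : ℂ) * (χ ^ 2) r := by
    rw [← Icc_add_one_left_eq_Ioc, zero_add]
    exact sum_congr rfl fun r _ => by rw [mul_div_right_comm, Nat.cast_totient_sq_div_self]
  rw [hsum]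
  calc _ ≤ 2 * (L + 1) * (N * (1 + Real.log N)) :=
        DirichletCharacter.norm_sum_Ioc_totient_mul_le hχ N
    _ ≤ 2 * (L + 1) * ((1 + 1 / (2 * ε)) * N ^ (1 + 2 * ε)) := by
        gcongr 2 * (L + 1) * ?_
        exact Real.mul_one_add_log_le hN (by positivity)
    _ ≤ 2 * (L + 1) * ((1 + 1 / (2 * ε)) * Real.sqrt Y ^ (1 + 2 * ε)) := by gcongr
    _ = 2 * (L + 1) * (1 + 1 / (2 * ε)) * Y ^ ((1 : ℝ) / 2 + ε) := by
        rw [Real.sqrt_eq_rpow, ← Real.rpow_mul (by linarith)]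
        ring_nf
end

section
/- For any odd squarefull positive integer x and nonzero integer m, the sum T(x; m) = ∑_{a mod x, gcd(a,x)=1} (a/x)·e_x(−a·m) satisfies |T(x; m)| ≪_ε |m| · x^{1/2+ε}. -/
open Finset

/-- `e_x(y) = exp(2πiy/x)`. -/
noncomputable def ex (x : ℕ) (y : ℝ) : ℂ := Complex.exp (2 * Real.pi * Complex.I * (y / x))

/-- `T(x; m) = ∑_{a mod x, gcd(a,x)=1} (a/x)·e_x(−a·m)`. -/
noncomputable def T (x : ℕ) (m : ℤ) : ℂ :=
  ∑ a ∈ Finset.range x, if Nat.Coprime a x then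
    (jacobiSym (a : ℤ) x : ℂ) * ex x (-((a : ℝ) * (m : ℝ))) else 0

/-- An integer is squarefull if every prime dividing it does so at least twice. -/
def Squarefull (n : ℕ) : Prop := ∀ p : ℕ, p.Prime → p ∣ n → p ^ 2 ∣ n

/-!
The Jacobi symbol `(a/x)` only depends on `a` modulo the radical `r` of `x`, so shifting the
summation variable by `r` multiplies `T(x; m)` by `e_x(-r m)`. Hence `T(x; m) = 0` unless
`x ∣ r m`, and then the trivial bound gives `‖T(x; m)‖ ≤ x ≤ r |m| ≤ |m| √x`, because
`r² ∣ x` for squarefull `x`.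
-/

open UniqueFactorizationMonoid

lemma Function.Periodic.sum_range_comp_add {M : Type*} [AddCommMonoid M] {f : ℕ → M} {n : ℕ}
    (hf : Function.Periodic f n) (k : ℕ) :
    ∑ i ∈ range n, f (i + k) = ∑ i ∈ range n, f i := by
  induction k with
  | zero => rfl
  | succ k ih =>
    rw [← ih]
    rcases n with _ | n
    · rfl
    have hk : f (n + 1 + k) = f k := by rw [Nat.add_comm]; exact hf k
    rw [sum_range_succ, sum_range_succ' (fun i => f (i + k)), Nat.zero_add, ← hk]
    simp only [Nat.add_right_comm _ 1 k, Nat.add_assoc]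

lemma jacobiSym_eq_of_radical_dvd_sub {x : ℕ} {a b : ℤ} (h : ((radical x : ℕ) : ℤ) ∣ a - b) :
    jacobiSym a x = jacobiSym b x := by
  refine congr_arg List.prod (List.pmap_congr_left _ fun p hp _ hprime => ?_)
  have : Fact p.Prime := ⟨hprime⟩
  have hpr : p ∣ radical x := by
    rw [Nat.radical_eq_prod_primeFactors]
    exact dvd_prod_of_mem _ (Nat.mem_primeFactors_iff_mem_primeFactorsList.2 hp)
  have hab : a ≡ b [ZMOD p] :=
    Int.modEq_iff_dvd.2 <| dvd_sub_comm.1 <| (Int.natCast_dvd_natCast.2 hpr).trans h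
  rw [legendreSym.mod, hab.eq, ← legendreSym.mod]

lemma Squarefull.radical_sq_dvd {x : ℕ} (hx : Squarefull x) : radical x ^ 2 ∣ x := by
  rcases eq_or_ne x 0 with rfl | hx0
  · exact dvd_zero _
  conv_rhs => rw [← Nat.prod_factorization_pow_eq_self hx0]
  rw [Nat.radical_eq_prod_primeFactors, ← prod_pow, Finsupp.prod, Nat.support_factorization]
  refine prod_dvd_prod_of_dvd _ _ fun p hp => pow_dvd_pow p ?_
  have hp' := Nat.mem_primeFactors.1 hp
  exact (hp'.1.pow_dvd_iff_le_factorization hx0).1 (hx p hp'.1 hp'.2.1)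

lemma Squarefull.radical_le_sqrt {x : ℕ} (hx : Squarefull x) (hx0 : x ≠ 0) :
    ((radical x : ℕ) : ℝ) ≤ √x := by
  rw [Real.le_sqrt (by positivity) (by positivity)]
  exact_mod_cast Nat.le_of_dvd (Nat.pos_of_ne_zero hx0) hx.radical_sq_dvd

lemma ex_add (x : ℕ) (y z : ℝ) : ex x (y + z) = ex x y * ex x z := by
  rw [ex, ex, ex, ← Complex.exp_add]
  push_cast
  ring_nf

lemma norm_ex (x : ℕ) (y : ℝ) : ‖ex x y‖ = 1 := by
  rw [ex, show 2 * (Real.pi : ℂ) * Complex.I * ((y : ℂ) / x) =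
    ((2 * Real.pi * (y / x) : ℝ) : ℂ) * Complex.I by push_cast; ring]
  exact Complex.norm_exp_ofReal_mul_I _

lemma ex_intCast_eq_one_iff {x : ℕ} (hx : x ≠ 0) (k : ℤ) : ex x k = 1 ↔ (x : ℤ) ∣ k := by
  have hx' : (x : ℂ) ≠ 0 := Nat.cast_ne_zero.2 hx
  have h2pi : 2 * (Real.pi : ℂ) * Complex.I ≠ 0 := by simp [Real.pi_ne_zero]
  rw [ex, Complex.exp_eq_one_iff]
  constructor
  · rintro ⟨n, hn⟩
    rw [mul_comm (n : ℂ), mul_right_inj' h2pi, div_eq_iff hx'] at hn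
    exact ⟨n, by rw [mul_comm]; exact_mod_cast hn⟩
  · rintro ⟨n, rfl⟩
    exact ⟨n, by push_cast; field_simp⟩

namespace T

/-- Since `(a/x) = 0` when `gcd(a, x) ≠ 1`, the coprimality test in `T` can be dropped. -/
noncomputable def summand (x : ℕ) (m : ℤ) (a : ℕ) : ℂ :=
  (jacobiSym (a : ℤ) x : ℂ) * ex x (-((a : ℝ) * (m : ℝ)))

lemma norm_summand_le_one (x : ℕ) (m : ℤ) (a : ℕ) : ‖summand x m a‖ ≤ 1 := by
  rw [summand, norm_mul, norm_ex, mul_one]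
  rcases jacobiSym.trichotomy a x with h | h | h <;> simp [h]

lemma summand_add_of_radical_dvd (x : ℕ) (m : ℤ) (a : ℕ) {k : ℕ} (hk : radical x ∣ k) :
    summand x m (a + k) = ex x (-((k : ℝ) * m)) * summand x m a := by
  have hjac : jacobiSym ((a + k : ℕ) : ℤ) x = jacobiSym (a : ℤ) x :=
    jacobiSym_eq_of_radical_dvd_sub (by push_cast; simpa using Int.natCast_dvd_natCast.2 hk)
  rw [summand, summand, hjac, show -(((a + k : ℕ) : ℝ) * m) = -(k * m) + -(a * m) by
    push_cast; ring, ex_add]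
  ring

lemma periodic_summand {x : ℕ} (hx : x ≠ 0) (m : ℤ) : Function.Periodic (summand x m) x := by
  intro a
  have hex : ex x (-((x : ℝ) * m)) = 1 := by
    exact_mod_cast (ex_intCast_eq_one_iff hx (-(x * m))).2 (dvd_neg.2 (dvd_mul_right _ _))
  rw [summand_add_of_radical_dvd x m a radical_dvd_self, hex, one_mul]

lemma eq_sum_summand {x : ℕ} (hx : x ≠ 0) (m : ℤ) : T x m = ∑ a ∈ range x, summand x m a := by
  have : NeZero x := ⟨hx⟩
  refine sum_congr rfl fun a _ => ?_
  split_ifs with hcop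
  · rfl
  · rw [summand, jacobiSym.eq_zero_iff_not_coprime.2 (by simpa using hcop)]
    simp

lemma norm_le_self {x : ℕ} (hx : x ≠ 0) (m : ℤ) : ‖T x m‖ ≤ x := by
  rw [eq_sum_summand hx]
  exact (norm_sum_le _ _).trans <| (sum_le_sum fun a _ => norm_summand_le_one x m a).trans
    (by simp)

lemma eq_ex_mul_self {x : ℕ} (hx : x ≠ 0) (m : ℤ) :
    T x m = ex x (-((radical x : ℕ) * m)) * T x m := by
  rw [eq_sum_summand hx, mul_sum, ← (periodic_summand hx m).sum_range_comp_add (radical x)]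
  exact sum_congr rfl fun a _ => summand_add_of_radical_dvd x m a dvd_rfl

lemma eq_zero_of_not_dvd {x : ℕ} (hx : x ≠ 0) {m : ℤ} (h : ¬ (x : ℤ) ∣ (radical x : ℕ) * m) :
    T x m = 0 := by
  have hne : ex x (-((radical x : ℕ) * m)) ≠ 1 := fun h1 => h <| dvd_neg.1 <|
    (ex_intCast_eq_one_iff hx (-(radical x * m))).1 (by exact_mod_cast h1)
  exact (mul_left_eq_self₀.1 (eq_ex_mul_self hx m).symm).resolve_left hne

lemma norm_le_radical_mul {x : ℕ} (hx : x ≠ 0) {m : ℤ} (hm : m ≠ 0) :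
    ‖T x m‖ ≤ (radical x : ℕ) * |(m : ℝ)| := by
  by_cases h : (x : ℤ) ∣ (radical x : ℕ) * m
  · have hle : (x : ℤ) ≤ |((radical x : ℕ) : ℤ) * m| :=
      Int.le_of_dvd (abs_pos.2 (mul_ne_zero (by positivity) hm)) ((dvd_abs _ _).2 h)
    calc ‖T x m‖ ≤ x := norm_le_self hx m
      _ ≤ (radical x : ℕ) * |(m : ℝ)| := by
        rw [abs_mul] at hle
        exact_mod_cast hle
  · rw [eq_zero_of_not_dvd hx h, norm_zero]
    positivity

end T

/-- For odd squarefull positive x and m ≠ 0,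
|T(x; m)| ≪_ε |m| · x^{1/2+ε}. -/
theorem stmt5 (ε : ℝ) (hε : 0 < ε) :
    ∃ C : ℝ, ∀ x : ℕ, 0 < x → Odd x → Squarefull x → ∀ m : ℤ, m ≠ 0 →
      ‖T x m‖ ≤ C * |(m : ℝ)| * (x : ℝ) ^ ((1 : ℝ) / 2 + ε) := by
  refine ⟨1, fun x hx _ hsf m hm => ?_⟩
  have hx1 : (1 : ℝ) ≤ x := by exact_mod_cast hx
  calc ‖T x m‖ ≤ (radical x : ℕ) * |(m : ℝ)| := T.norm_le_radical_mul hx.ne' hm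
    _ ≤ √x * |(m : ℝ)| := by gcongr; exact hsf.radical_le_sqrt hx.ne'
    _ ≤ 1 * |(m : ℝ)| * (x : ℝ) ^ ((1 : ℝ) / 2 + ε) := by
      rw [Real.sqrt_eq_rpow, one_mul, mul_comm]
      gcongr
      linarith
end

section
/- For any real character χ modulo L and nonzero integer vector c with F*(c) ≠ 0, the condition that the character n ↦ χ(n)·(−F*(c)/n) (Jacobi symbol) is principal holds if and only if there exists an integer ξ dividing L such that χ(·) = (ξ/·) and −F*(c) = ξ·(a square). -/
/-! Write `D = ξ b²` with `ξ` squarefree. Since `(ξ b² / n) = (ξ / n)` and `(ξ / n)² = 1` for `n`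
coprime to `M`, the triviality of `χ(n)(D / n)` says exactly that `χ(n) = (ξ / n)`. It remains to
see that every prime `p ∣ ξ` divides `L`: otherwise the Chinese remainder theorem yields `n ≡ 1`
modulo the prime-to-`p` part of `M`, hence `χ(n) = 1`, with `(ξ / n) = -1`; take `n` a quadratic
nonresidue mod `p` if `p` is odd (then `(p / n) = (n / p)` as `n ≡ 1 mod 4`), and `n ≡ 5 mod 8`
if `p = 2`. -/

open scoped NumberTheorySymbols

lemma Int.exists_eq_squarefree_mul_sq (D : ℤ) : ∃ ξ b : ℤ, D = ξ * b ^ 2 ∧ Squarefree ξ := by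
  obtain ⟨a, b, hab, ha⟩ := Nat.sq_mul_squarefree D.natAbs
  rcases Int.natAbs_eq D with hD | hD
  · exact ⟨a, b, by rw [hD, ← hab]; push_cast; ring, Int.squarefree_natAbs.mp (by simpa)⟩
  · exact ⟨-a, b, by rw [hD, ← hab]; push_cast; ring, Int.squarefree_natAbs.mp (by simpa)⟩

lemma Squarefree.dvd_of_forall_prime_dvd {a k : ℕ} (ha : Squarefree a)
    (h : ∀ p, p.Prime → p ∣ a → p ∣ k) : a ∣ k := by
  rw [← Nat.prod_primeFactors_of_squarefree ha]
  exact Finset.prod_primes_dvd k (fun p hp => (Nat.prime_of_mem_primeFactors hp).prime)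
    (fun p hp => h p (Nat.prime_of_mem_primeFactors hp) (Nat.dvd_of_mem_primeFactors hp))

lemma Int.gcd_eq_one_of_natAbs_dvd {a : ℤ} {n M : ℕ} (hn : n.Coprime M) (ha : a.natAbs ∣ M) :
    a.gcd n = 1 :=
  (hn.coprime_dvd_right ha).symm

lemma Nat.coprime_of_modEq_one {n K : ℕ} (h : n ≡ 1 [MOD K]) : n.Coprime K := by
  rw [Nat.Coprime, h.gcd_eq, Nat.gcd_one_left]

namespace jacobiSym

lemma mul_sq_left {a b : ℤ} {n : ℕ} (h : b.gcd n = 1) : J(a * b ^ 2 | n) = J(a | n) := by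
  rw [mul_left, sq_one' h, mul_one]

lemma eq_one_of_odd_of_modEq_one {a : ℤ} {n : ℕ} (ha : Odd a) (h4 : n ≡ 1 [MOD 4])
    (h : n ≡ 1 [MOD a.natAbs]) : J(a | n) = 1 := by
  have hcop : Nat.Coprime 4 a.natAbs :=
    Nat.Coprime.pow_left 2 (Nat.coprime_two_left.mpr (Int.natAbs_odd.mpr ha))
  have h4a : n ≡ 1 [MOD 4 * a.natAbs] := (Nat.modEq_and_modEq_iff_modEq_mul hcop).mp ⟨h4, h⟩
  have hn : Odd n := Nat.odd_iff.mpr (h4.of_dvd (by norm_num : 2 ∣ 4))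
  have hlt : 1 < 4 * a.natAbs := by
    have : a.natAbs ≠ 0 := by rintro h; simp [Int.natAbs_eq_zero.mp h] at ha
    omega
  rw [mod_right a hn, h4a, Nat.mod_eq_of_lt hlt, one_right]

lemma eq_one_of_modEq_one {a : ℤ} {n : ℕ} (h8 : n ≡ 1 [MOD 8]) (h : n ≡ 1 [MOD a.natAbs]) :
    J(a | n) = 1 := by
  rcases eq_or_ne a 0 with rfl | ha
  · rw [show n = 1 by simpa [Nat.ModEq] using h, one_right]
  obtain ⟨c, hc, h2c⟩ :=
    (Int.finiteMultiplicity_iff (a := 2).mpr ⟨by decide, ha⟩).exists_eq_pow_mul_and_not_dvd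
  have hn : Odd n := Nat.odd_iff.mpr (h8.of_dvd (by norm_num : 2 ∣ 8))
  have h2 : J(2 | n) = 1 := by
    rw [at_two hn, ZMod.χ₈_nat_mod_eight, show n % 8 = 1 from h8]; rfl
  have hcodd : Odd c := Int.not_even_iff_odd.mp (by rwa [even_iff_two_dvd])
  have hca : c.natAbs ∣ a.natAbs := Int.natAbs_dvd_natAbs.mpr ⟨_, by rw [hc, mul_comm]⟩
  rw [hc, mul_left, pow_left, h2, one_pow, one_mul,
    eq_one_of_odd_of_modEq_one hcodd (h8.of_dvd (by norm_num)) (h.of_dvd hca)]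

lemma exists_two_mul_eq_neg_one {K : ℕ} (hK : Odd K) {η : ℤ} (hη : η.natAbs ∣ K) :
    ∃ n : ℕ, n.Coprime 2 ∧ n ≡ 1 [MOD K] ∧ J(2 * η | n) = -1 := by
  obtain ⟨n, hn8, hnK⟩ := Nat.chineseRemainder
    (by simpa using Nat.Coprime.pow_left 3 (Nat.coprime_two_left.mpr hK)) 5 1
  have hn4 : n ≡ 1 [MOD 4] := (hn8.of_dvd (by norm_num : 4 ∣ 8)).trans rfl
  have hn : Odd n := Nat.odd_iff.mpr (hn8.of_dvd (by norm_num : 2 ∣ 8))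
  have hηodd : Odd η := Int.natAbs_odd.mp (hK.of_dvd_nat hη)
  refine ⟨n, Nat.coprime_two_right.mpr hn, hnK, ?_⟩
  rw [mul_left, at_two hn, ZMod.χ₈_nat_mod_eight, show n % 8 = 5 from hn8,
    eq_one_of_odd_of_modEq_one hηodd hn4 (hnK.of_dvd hη)]
  rfl

lemma exists_odd_prime_mul_eq_neg_one {p K : ℕ} [Fact p.Prime] (hp : p ≠ 2) (hpK : p.Coprime K)
    (h8 : 8 ∣ K) {η : ℤ} (hη : η.natAbs ∣ K) :
    ∃ n : ℕ, n.Coprime p ∧ n ≡ 1 [MOD K] ∧ J(p * η | n) = -1 := by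
  obtain ⟨x, hx⟩ := FiniteField.exists_nonsquare (F := ZMod p) (by rwa [ZMod.ringChar_zmod_n])
  obtain ⟨n, hnx, hnK⟩ := Nat.chineseRemainder hpK x.val 1
  have hn8 : n ≡ 1 [MOD 8] := hnK.of_dvd h8
  have hn4 : n % 4 = 1 := hn8.of_dvd (by norm_num : 4 ∣ 8)
  have hn : (n : ZMod p) = x := by
    rw [(ZMod.natCast_eq_natCast_iff n x.val p).mpr hnx, ZMod.natCast_zmod_val]
  have hpJ : J(p | n) = -1 := by
    rw [quadratic_reciprocity_one_mod_four' ((Fact.out : p.Prime).odd_of_ne_two hp) hn4,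
      ← legendreSym.to_jacobiSym, legendreSym.eq_neg_one_iff', hn]
    exact hx
  have hnp : n.Coprime p := by
    rw [Nat.coprime_comm, (Fact.out : p.Prime).coprime_iff_not_dvd, ← ZMod.natCast_eq_zero_iff,
      hn]
    rintro rfl
    exact hx IsSquare.zero
  refine ⟨n, hnp, hnK, ?_⟩
  rw [mul_left, hpJ, eq_one_of_modEq_one hn8 (hnK.of_dvd hη), mul_one]

end jacobiSym

open Nat in
lemma exists_coprime_modEq_one_jacobiSym_eq_neg_one {M p : ℕ} {ξ : ℤ} (hM : M ≠ 0) (h8 : 8 ∣ M)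
    (hp : p.Prime) (hξ : Squarefree ξ) (hξM : ξ.natAbs ∣ M) (hpξ : (p : ℤ) ∣ ξ) :
    ∃ n : ℕ, n.Coprime M ∧ n ≡ 1 [MOD ordCompl[p] M] ∧ J(ξ | n) = -1 := by
  have := Fact.mk hp
  obtain ⟨η, rfl⟩ := hpξ
  have hpη : ¬ p ∣ η.natAbs := fun h =>
    hp.not_isUnit (Int.ofNat_isUnit.mp (hξ p (mul_dvd_mul_left _ (Int.natCast_dvd.mpr h))))
  have hηK : η.natAbs ∣ ordCompl[p] M :=
    dvd_ordCompl_of_dvd_not_dvd ((Int.natAbs_mul _ _ ▸ dvd_mul_left _ _).trans hξM) hpη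
  have hpK : p.Coprime (ordCompl[p] M) := coprime_ordCompl hp hM
  suffices ∃ n : ℕ, n.Coprime p ∧ n ≡ 1 [MOD ordCompl[p] M] ∧ J(p * η | n) = -1 by
    obtain ⟨n, hnp, hnK, hJ⟩ := this
    refine ⟨n, ?_, hnK, hJ⟩
    rw [← ordProj_mul_ordCompl_eq_self M p]
    exact (hnp.pow_right _).mul_right (Nat.coprime_of_modEq_one hnK)
  rcases eq_or_ne p 2 with rfl | hp2
  · exact jacobiSym.exists_two_mul_eq_neg_one (coprime_two_left.mp hpK) hηK
  · have hp8 : ¬ p ∣ 2 ^ 3 := fun h =>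
      hp2 ((prime_dvd_prime_iff_eq hp prime_two).mp (hp.dvd_of_dvd_pow h))
    exact jacobiSym.exists_odd_prime_mul_eq_neg_one hp2 hpK (dvd_ordCompl_of_dvd_not_dvd h8 hp8)
      hηK

lemma dvd_of_forall_mul_jacobiSym_eq_one {L M : ℕ} (χ : DirichletCharacter ℂ L) {ξ : ℤ}
    (hM : M ≠ 0) (h8 : 8 ∣ M) (hLM : L ∣ M) (hξ : Squarefree ξ) (hξM : ξ.natAbs ∣ M)
    (h : ∀ n : ℕ, n.Coprime M → χ n * J(ξ | n) = 1) : ξ ∣ L := by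
  rw [← Int.natAbs_dvd_natAbs, Int.natAbs_natCast]
  refine (Int.squarefree_natAbs.mpr hξ).dvd_of_forall_prime_dvd fun p hp hpξ => ?_
  by_contra hpL
  obtain ⟨n, hnM, hnK, hJ⟩ :=
    exists_coprime_modEq_one_jacobiSym_eq_neg_one hM h8 hp hξ hξM (Int.natCast_dvd.mpr hpξ)
  have hnL : n ≡ 1 [MOD L] := hnK.of_dvd (Nat.dvd_ordCompl_of_dvd_not_dvd hLM hpL)
  have hχ : χ n = 1 := by
    rw [(ZMod.natCast_eq_natCast_iff n 1 L).mpr hnL, Nat.cast_one, map_one]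
  have := h n hnM
  rw [hχ, hJ] at this
  norm_num at this

theorem forall_mul_jacobiSym_eq_one_iff {L M : ℕ} (χ : DirichletCharacter ℂ L) {D : ℤ}
    (hM : M ≠ 0) (h8 : 8 ∣ M) (hLM : L ∣ M) (hDM : D.natAbs ∣ M) :
    (∀ n : ℕ, n.Coprime M → χ n * J(D | n) = 1) ↔
      ∃ ξ : ℤ, ξ ∣ L ∧ (∀ n : ℕ, n.Coprime M → χ n = J(ξ | n)) ∧ ∃ b : ℤ, D = ξ * b ^ 2 := by
  have hb_dvd {ξ b : ℤ} (hD : D = ξ * b ^ 2) : b.natAbs ∣ M :=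
    (Int.natAbs_dvd_natAbs.mpr (hD ▸ (dvd_pow_self b two_ne_zero).mul_left ξ)).trans hDM
  constructor
  · obtain ⟨ξ, b, hD, hξ⟩ := Int.exists_eq_squarefree_mul_sq D
    have hξM : ξ.natAbs ∣ M :=
      (Int.natAbs_dvd_natAbs.mpr (hD ▸ dvd_mul_right ξ (b ^ 2))).trans hDM
    intro h
    have hmul (n : ℕ) (hn : n.Coprime M) : χ n * J(ξ | n) = 1 := by
      rw [← jacobiSym.mul_sq_left (Int.gcd_eq_one_of_natAbs_dvd hn (hb_dvd hD)), ← hD]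
      exact h n hn
    have hχ (n : ℕ) (hn : n.Coprime M) : χ n = J(ξ | n) := by
      have hJ : (J(ξ | n) : ℂ) * J(ξ | n) = 1 := by
        exact_mod_cast
          (sq _).symm.trans (jacobiSym.sq_one (Int.gcd_eq_one_of_natAbs_dvd hn hξM))
      rw [eq_inv_of_mul_eq_one_left (hmul n hn), inv_eq_of_mul_eq_one_right hJ]
    exact ⟨ξ, dvd_of_forall_mul_jacobiSym_eq_one χ hM h8 hLM hξ hξM hmul, hχ, b, hD⟩
  · rintro ⟨ξ, hξL, hχ, b, hD⟩ n hn
    have hξM : ξ.natAbs ∣ M := (Int.natAbs_dvd_natAbs.mpr hξL).trans (by simpa using hLM)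
    rw [hχ n hn, hD, jacobiSym.mul_sq_left (Int.gcd_eq_one_of_natAbs_dvd hn (hb_dvd hD)),
      ← Int.cast_mul, ← sq, jacobiSym.sq_one (Int.gcd_eq_one_of_natAbs_dvd hn hξM), Int.cast_one]

theorem stmt16_general (L : ℕ) (hL : 0 < L) (χ : DirichletCharacter ℂ L)
    (A : Matrix (Fin 3) (Fin 3) ℤ) (hdet : A.det ≠ 0)
    (Fc : ℤ) (hFc0 : Fc ≠ 0) :
    (∀ n : ℕ, Nat.Coprime n (8 * L * A.det.natAbs * Fc.natAbs) →
        χ (n : ZMod L) * (jacobiSym (-Fc) n : ℂ) = 1)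
    ↔ ∃ ξ : ℤ, ξ ∣ (L : ℤ) ∧
        (∀ n : ℕ, Nat.Coprime n (8 * L * A.det.natAbs * Fc.natAbs) →
          χ (n : ZMod L) = (jacobiSym ξ n : ℂ)) ∧
        ∃ b : ℤ, -Fc = ξ * b ^ 2 :=
  forall_mul_jacobiSym_eq_one_iff χ (by simp [hL.ne', hdet, hFc0])
    ⟨L * A.det.natAbs * Fc.natAbs, by ring⟩ ⟨8 * A.det.natAbs * Fc.natAbs, by ring⟩
    (by rw [Int.natAbs_neg]; exact dvd_mul_left _ _)

/-- For a real character χ mod L and c ≠ 0 with F*(c) ≠ 0 (F* the adjoint of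
a non-degenerate integral ternary quadratic form F), the character n ↦ χ(n)·(−F*(c)/n)
(of modulus Ω|F*(c)|, Ω = 8LΔ) is principal iff there is ξ ∣ L with χ(·) = (ξ/·) and
−F*(c) = ξ·(square). -/
theorem stmt16 (L : ℕ) (hL : 0 < L) (χ : DirichletCharacter ℂ L) (hreal : χ ^ 2 = 1)
    (A : Matrix (Fin 3) (Fin 3) ℤ) (hsymm : A.IsSymm) (hdet : A.det ≠ 0)
    (c : Fin 3 → ℤ) (hc : c ≠ 0)
    (Fc : ℤ) (hFc : Fc = ∑ i, ∑ j, A.adjugate i j * c i * c j) (hFc0 : Fc ≠ 0) :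
    (∀ n : ℕ, Nat.Coprime n (8 * L * A.det.natAbs * Fc.natAbs) →
        χ (n : ZMod L) * (jacobiSym (-Fc) n : ℂ) = 1)
    ↔ ∃ ξ : ℤ, ξ ∣ (L : ℤ) ∧
        (∀ n : ℕ, Nat.Coprime n (8 * L * A.det.natAbs * Fc.natAbs) →
          χ (n : ZMod L) = (jacobiSym ξ n : ℂ)) ∧
        ∃ b : ℤ, -Fc = ξ * b ^ 2 :=
  stmt16_general L hL χ A hdet Fc hFc0
end
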